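/- Every zero-median solution (x_1, …, x_N) of the MIW recursion has zero mean: x_1 + x_2 + ⋯ + x_N = 0. -/
import Mathlib


noncomputable section

/-- Partial sums `S_n = x_1 + ⋯ + x_n`. -/
def Ssum (x : ℕ → ℝ) (n : ℕ) : ℝ := ∑ i ∈ Finset.Icc 1 n, x i

/-- `x` is a solution of the MIW recursion
`x_{n+1} = x_n - 1/(x_1 + ⋯ + x_n)` for `1 ≤ n ≤ N - 1`. -/
def IsMIW (N : ℕ) (x : ℕ → ℝ) : Prop :=
  ∀ n, 1 ≤ n → n ≤ N - 1 → Ssum x n ≠ 0 ∧ x (n + 1) = x n - 1 / Ssum x n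

/-- Zero-median: `x_m = 0` if `N` is odd and `x_m = -x_{m+1}` if `N` is even,
where `m = (N+1)/2` if `N` is odd and `m = N/2` if `N` is even. -/
def ZeroMedian (N : ℕ) (x : ℕ → ℝ) : Prop :=
  if N % 2 = 1 then x ((N + 1) / 2) = 0 else x (N / 2) = -x (N / 2 + 1)

lemma Ssum_zero (x : ℕ → ℝ) : Ssum x 0 = 0 := by
  simp [Ssum]

lemma Ssum_succ (x : ℕ → ℝ) (n : ℕ) : Ssum x (n + 1) = Ssum x n + x (n + 1) := by
  simpa [Ssum] using Finset.sum_Icc_succ_top (Nat.succ_le_succ (Nat.zero_le n)) x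

lemma miw_step (N : ℕ) (x : ℕ → ℝ) (hMIW : IsMIW N x) (a b k : ℕ)
    (hab : a + b = N) (hb : k + 2 ≤ b) (hba : b ≤ a)
    (h0 : Ssum x (a + k) = Ssum x (b - k))
    (h1 : Ssum x (a + k + 1) = Ssum x (b - (k + 1))) :
    Ssum x (a + k + 2) = Ssum x (b - (k + 2)) := by
  obtain ⟨c, rfl⟩ : ∃ c, b = c + k + 2 := ⟨b - (k + 2), by omega⟩
  have e0 : c + k + 2 - k = c + 2 := by omega
  have e1 : c + k + 2 - (k + 1) = c + 1 := by omega
  have e2 : c + k + 2 - (k + 2) = c := by omega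
  rw [e0] at h0; rw [e1] at h1; rw [e2]
  obtain ⟨hne1, hr1⟩ := hMIW (a + k + 1) (by omega) (by omega)
  obtain ⟨hne2, hr2⟩ := hMIW (c + 1) (by omega) (by omega)
  have s1 : Ssum x (a + k + 1) = Ssum x (a + k) + x (a + k + 1) := Ssum_succ x _
  have s2 : Ssum x (a + k + 2) = Ssum x (a + k + 1) + x (a + k + 2) := Ssum_succ x _
  have s3 : Ssum x (c + 1) = Ssum x c + x (c + 1) := Ssum_succ x _
  have s4 : Ssum x (c + 2) = Ssum x (c + 1) + x (c + 2) := Ssum_succ x _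
  rw [h1] at hr1 hne1 s2
  rw [show a + k + 1 + 1 = a + k + 2 from rfl] at hr1
  rw [show c + 1 + 1 = c + 2 from rfl] at hr2
  linarith [hr1, hr2, s1, s2, s3, s4, h0, h1]

/-- Every zero-median solution of the MIW recursion has zero mean. -/
theorem zeroMedian_zero_mean (N : ℕ) (hN : 2 ≤ N) (x : ℕ → ℝ)
    (hMIW : IsMIW N x) (hmed : ZeroMedian N x) :
    ∑ i ∈ Finset.Icc 1 N, x i = 0 := by
  -- set up a = (N+1)/2, b = N/2 with base cases of the symmetry
  obtain ⟨a, b, hab, hba, hb1, h0, h1⟩ :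
      ∃ a b : ℕ, a + b = N ∧ b ≤ a ∧ 1 ≤ b ∧
        Ssum x a = Ssum x b ∧ Ssum x (a + 1) = Ssum x (b - 1) := by
    unfold ZeroMedian at hmed
    by_cases hpar : N % 2 = 1
    · rw [if_pos hpar] at hmed
      obtain ⟨c, rfl⟩ : ∃ c, N = 2 * c + 3 := ⟨(N - 3) / 2, by omega⟩
      refine ⟨c + 2, c + 1, by ring, by omega, by omega, ?_, ?_⟩
      · have hm : (2 * c + 3 + 1) / 2 = c + 2 := by omega
        rw [hm] at hmed
        have := Ssum_succ x (c + 1)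
        rw [hmed] at this
        simpa using this
      · have hm : (2 * c + 3 + 1) / 2 = c + 2 := by omega
        rw [hm] at hmed
        obtain ⟨hne1, hr1⟩ := hMIW (c + 2) (by omega) (by omega)
        obtain ⟨hne2, hr2⟩ := hMIW (c + 1) (by omega) (by omega)
        have s1 : Ssum x (c + 1) = Ssum x c + x (c + 1) := Ssum_succ x _
        have s2 : Ssum x (c + 2) = Ssum x (c + 1) + x (c + 2) := Ssum_succ x _
        have s3 : Ssum x (c + 3) = Ssum x (c + 2) + x (c + 3) := Ssum_succ x _
        have e : c + 1 - 1 = c := by omega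
        rw [show c + 2 + 1 = c + 3 from rfl, e]
        rw [hmed] at hr2 s2
        -- S(c+2) = S(c+1); x(c+1) = 1/S(c+1); S(c+3) = S(c+2) - 1/S(c+2)
        have hSe : Ssum x (c + 2) = Ssum x (c + 1) := by linarith
        rw [hSe] at hr1 hne1 s3
        rw [show c + 2 + 1 = c + 3 from rfl] at hr1
        linarith [hr1, hr2, s1, s3, hSe]
    · rw [if_neg hpar] at hmed
      obtain ⟨c, rfl⟩ : ∃ c, N = 2 * c + 2 := ⟨(N - 2) / 2, by omega⟩
      have hm : (2 * c + 2) / 2 = c + 1 := by omega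
      rw [hm] at hmed
      refine ⟨c + 1, c + 1, by ring, le_rfl, by omega, rfl, ?_⟩
      have s1 : Ssum x (c + 1) = Ssum x c + x (c + 1) := Ssum_succ x _
      have s2 : Ssum x (c + 2) = Ssum x (c + 1) + x (c + 2) := Ssum_succ x _
      have e : c + 1 - 1 = c := by omega
      rw [show c + 1 + 1 = c + 2 from rfl, e]
      rw [hmed] at s1
      linarith
  have key : ∀ j, j ≤ b → Ssum x (a + j) = Ssum x (b - j) := by
    intro j
    induction j using Nat.strong_induction_on with
    | _ j ih =>
      match j with
      | 0 => intro _; simpa using h0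
      | 1 => intro _; exact h1
      | (k + 2) =>
        intro h
        exact miw_step N x hMIW a b k hab h hba
          (ih k (by omega) (by omega)) (ih (k + 1) (by omega) (by omega))
  have := key b le_rfl
  rw [hab, Nat.sub_self, Ssum_zero] at this
  simpa [Ssum] using this
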